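/- arXiv:1102.2511 — 2 statements merged into one kernel-verified Lean document; each statement's English description precedes it below -/
import Mathlib

section
/- Let T be a time scale, a, b ∈ T with a < b, and suppose g ∈ L¹([a,b); μ_σ) with f̄(x) = f̄(a) + ∫_{[a,x)} g dμ_σ for x ∈ [a,b], where f̄ is the extension of f : T → ℂ. If t ∈ [a,b) ∩ T is an isolated point of T (both right and left scattered), then f is delta differentiable at t with f^Δ(t) = (1/μ_σ({t})) ∫_{{t}} g dμ_σ = g(t). -/
open Set MeasureTheory Filter Topology Function

open Classical in
noncomputable def fwd (T : Set ℝ) (t : ℝ) : ℝ :=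
  if {s | s ∈ T ∧ t < s}.Nonempty then sInf {s | s ∈ T ∧ t < s} else sSup T

open Classical in
noncomputable def bwd (T : Set ℝ) (t : ℝ) : ℝ :=
  if {s | s ∈ T ∧ s < t}.Nonempty then sSup {s | s ∈ T ∧ s < t} else sInf T

/-- `f` has Hilger (delta) derivative `L` at the point `t` of the time scale `T`. -/
def HasDeltaDerivAt (T : Set ℝ) (f : ℝ → ℂ) (t : ℝ) (L : ℂ) : Prop :=
  ∀ ε > (0:ℝ), ∃ U ∈ nhdsWithin t T, ∀ s ∈ U,
    ‖f (fwd T t) - f s - L * ((fwd T t : ℂ) - (s : ℂ))‖ ≤ ε * |fwd T t - s|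

open Classical in
noncomputable def tsExtend (T : Set ℝ) (f : ℝ → ℂ) : ℝ → ℂ :=
  fun t => if t ∈ T then f t else f (fwd T t)

/-! The Stieltjes function of `μ_σ` is `σ` itself, whose left limit at a point `t` of the time
scale is `t` (for `s < t` one has `s ≤ σ s ≤ t`). Hence `μ_σ {t} = σ t - t` and
`μ_σ (t, σ t) = σ t - σ t = 0`, so `f (σ t) - f t = ∫_[t, σ t) g dμ_σ = (σ t - t) g t`.
Since `t` is isolated, the neighbourhood `{t}` reduces the delta-derivative estimate to this
identity. -/

lemma sub_eq_setIntegral_Ico {E : Type*} [NormedAddCommGroup E] [NormedSpace ℝ E]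
    {μ : Measure ℝ} {φ g : ℝ → E} {a b x y : ℝ} (hg : IntegrableOn g (Ico a b) μ)
    (hφ : ∀ z ∈ Icc a b, φ z = φ a + ∫ s in Ico a z, g s ∂μ)
    (hax : a ≤ x) (hxy : x ≤ y) (hyb : y ≤ b) :
    φ y - φ x = ∫ s in Ico x y, g s ∂μ := by
  rw [hφ y ⟨hax.trans hxy, hyb⟩, hφ x ⟨hax, hxy.trans hyb⟩,
    ← Ico_union_Ico_eq_Ico hax hxy,
    setIntegral_union Ico_disjoint_Ico_same measurableSet_Ico
      (hg.mono_set (Ico_subset_Ico_right (hxy.trans hyb))) (hg.mono_set (Ico_subset_Ico hax hyb))]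
  abel

variable {T : Set ℝ} {F : StieltjesFunction ℝ} {t u : ℝ}

lemma fwd_le_of_mem (hu : u ∈ T) (htu : t < u) : fwd T t ≤ u := by
  rw [fwd, if_pos ⟨u, hu, htu⟩]
  exact csInf_le ⟨t, fun _ hv ↦ hv.2.le⟩ ⟨hu, htu⟩

lemma le_bwd_of_mem (hu : u ∈ T) (hut : u < t) : u ≤ bwd T t := by
  rw [bwd, if_pos ⟨u, hu, hut⟩]
  exact le_csSup ⟨t, fun _ hv ↦ hv.2.le⟩ ⟨hu, hut⟩

lemma le_fwd_of_mem (hu : u ∈ T) (htu : t < u) : t ≤ fwd T t := by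
  rw [fwd, if_pos ⟨u, hu, htu⟩]
  exact le_csInf ⟨u, hu, htu⟩ fun _ hv ↦ hv.2.le

lemma fwd_mem (hT : IsClosed T) (hu : u ∈ T) (htu : t < u) : fwd T t ∈ T := by
  rw [fwd, if_pos ⟨u, hu, htu⟩]
  exact closure_minimal (fun _ hv ↦ hv.1) hT
    (csInf_mem_closure ⟨u, hu, htu⟩ ⟨t, fun _ hv ↦ hv.2.le⟩)

lemma singleton_mem_nhdsWithin_of_bwd_lt_of_lt_fwd (hls : bwd T t < t) (hrs : t < fwd T t) :
    {t} ∈ 𝓝[T] t := by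
  refine mem_nhdsWithin.2 ⟨Ioo (bwd T t) (fwd T t), isOpen_Ioo, ⟨hls, hrs⟩, ?_⟩
  rintro u ⟨⟨hbu, hus⟩, hu⟩
  rcases lt_trichotomy u t with hut | rfl | htu
  · exact absurd (le_bwd_of_mem hu hut) hbu.not_ge
  · rfl
  · exact absurd (fwd_le_of_mem hu htu) hus.not_ge

lemma leftLim_fwd (ht : t ∈ T) : leftLim (fwd T) t = t := by
  refine leftLim_eq_of_tendsto <| tendsto_of_tendsto_of_tendsto_of_le_of_le'
    (tendsto_nhdsWithin_of_tendsto_nhds tendsto_id) tendsto_const_nhds ?_ ?_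
  all_goals filter_upwards [self_mem_nhdsWithin] with s (hs : s < t)
  · exact le_fwd_of_mem ht hs
  · exact fwd_le_of_mem ht hs

lemma tsExtend_of_mem (f : ℝ → ℂ) (ht : t ∈ T) : tsExtend T f t = f t := by
  simp [tsExtend, ht]

lemma hasDeltaDerivAt_of_singleton_mem_nhdsWithin {f : ℝ → ℂ} {L : ℂ}
    (hiso : {t} ∈ 𝓝[T] t) (hf : f (fwd T t) - f t = L * ((fwd T t : ℂ) - t)) :
    HasDeltaDerivAt T f t L := by
  refine fun ε hε ↦ ⟨{t}, hiso, fun s hs ↦ ?_⟩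
  rw [mem_singleton_iff.1 hs, hf, sub_self, norm_zero]
  positivity

lemma measure_singleton_of_eq_fwd (hF : ∀ s, F s = fwd T s) (ht : t ∈ T) :
    F.measure {t} = ENNReal.ofReal (fwd T t - t) := by
  rw [F.measure_singleton, show ⇑F = fwd T from funext hF, leftLim_fwd ht]

lemma toReal_measure_singleton_of_eq_fwd (hF : ∀ s, F s = fwd T s) (ht : t ∈ T)
    (hrs : t < fwd T t) : (F.measure {t}).toReal = fwd T t - t := by
  rw [measure_singleton_of_eq_fwd hF ht, ENNReal.toReal_ofReal (sub_nonneg.2 hrs.le)]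

lemma measure_Ioo_fwd_of_eq_fwd (hF : ∀ s, F s = fwd T s) (hσ : fwd T t ∈ T) :
    F.measure (Ioo t (fwd T t)) = 0 := by
  rw [F.measure_Ioo, show ⇑F = fwd T from funext hF, leftLim_fwd hσ, sub_self,
    ENNReal.ofReal_zero]

lemma setIntegral_Ico_fwd_of_eq_fwd {E : Type*} [NormedAddCommGroup E] [NormedSpace ℝ E]
    [CompleteSpace E] (hF : ∀ s, F s = fwd T s) (g : ℝ → E) (ht : t ∈ T) (hσ : fwd T t ∈ T)
    (hrs : t < fwd T t) :
    ∫ s in Ico t (fwd T t), g s ∂F.measure = (fwd T t - t) • g t := by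
  have hnull : Ioo t (fwd T t) =ᵐ[F.measure] (∅ : Set ℝ) :=
    ae_eq_empty.2 (measure_Ioo_fwd_of_eq_fwd hF hσ)
  rw [← Ioo_insert_left hrs, insert_eq,
    setIntegral_congr_set (union_ae_eq_left_of_ae_eq_empty hnull), integral_singleton,
    measureReal_def, toReal_measure_singleton_of_eq_fwd hF ht hrs]

theorem deltaDeriv_at_isolated_point_general
    (T : Set ℝ) (hcl : IsClosed T)
    (F : StieltjesFunction ℝ) (hF : ∀ t, F t = fwd T t)
    (f g : ℝ → ℂ) (a b : ℝ) (hb : b ∈ T)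
    (hg : IntegrableOn g (Ico a b) F.measure)
    (hrep : ∀ x ∈ Icc a b,
      tsExtend T f x = tsExtend T f a + ∫ s in Ico a x, g s ∂F.measure)
    (t : ℝ) (ht : t ∈ Ico a b) (htT : t ∈ T)
    (hrs : t < fwd T t) (hls : bwd T t < t) :
    HasDeltaDerivAt T f t
        ((F.measure {t}).toReal⁻¹ • ∫ s in ({t} : Set ℝ), g s ∂F.measure) ∧
      ((F.measure {t}).toReal⁻¹ • ∫ s in ({t} : Set ℝ), g s ∂F.measure) = g t := by
  have hσT : fwd T t ∈ T := fwd_mem hcl hb ht.2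
  have hL : (F.measure {t}).toReal⁻¹ • ∫ s in ({t} : Set ℝ), g s ∂F.measure = g t := by
    rw [integral_singleton, measureReal_def, inv_smul_smul₀]
    exact (toReal_measure_singleton_of_eq_fwd hF htT hrs).trans_ne (sub_pos.2 hrs).ne'
  refine ⟨hL ▸ hasDeltaDerivAt_of_singleton_mem_nhdsWithin
    (singleton_mem_nhdsWithin_of_bwd_lt_of_lt_fwd hls hrs) ?_, hL⟩
  calc f (fwd T t) - f t = tsExtend T f (fwd T t) - tsExtend T f t := by
        rw [tsExtend_of_mem f hσT, tsExtend_of_mem f htT]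
    _ = ∫ s in Ico t (fwd T t), g s ∂F.measure :=
        sub_eq_setIntegral_Ico hg hrep ht.1 hrs.le (fwd_le_of_mem hb ht.2)
    _ = ((fwd T t - t : ℝ) : ℂ) * g t := by
        rw [setIntegral_Ico_fwd_of_eq_fwd hF g htT hσT hrs, Complex.real_smul]
    _ = g t * ((fwd T t : ℂ) - t) := by push_cast; ring

theorem deltaDeriv_at_isolated_point
    (T : Set ℝ) (hne : T.Nonempty) (hcl : IsClosed T)
    (F : StieltjesFunction ℝ) (hF : ∀ t, F t = fwd T t)
    (f g : ℝ → ℂ) (a b : ℝ) (ha : a ∈ T) (hb : b ∈ T) (hab : a < b)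
    (hg : IntegrableOn g (Ico a b) F.measure)
    (hrep : ∀ x ∈ Icc a b,
      tsExtend T f x = tsExtend T f a + ∫ s in Ico a x, g s ∂F.measure)
    (t : ℝ) (ht : t ∈ Ico a b) (htT : t ∈ T)
    (hrs : t < fwd T t) (hls : bwd T t < t) :
    HasDeltaDerivAt T f t
        ((F.measure {t}).toReal⁻¹ • ∫ s in ({t} : Set ℝ), g s ∂F.measure) ∧
      ((F.measure {t}).toReal⁻¹ • ∫ s in ({t} : Set ℝ), g s ∂F.measure) = g t :=
  deltaDeriv_at_isolated_point_general T hcl F hF f g a b hb hg hrep t ht htT hrs hls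
end

section
/- Let T be a time scale, a, b ∈ T with a < b, and g : [a,b) → ℂ with g ∈ L¹([a,b); μ_σ) satisfying g(s) = g(ρ(s)) for s ∉ T. If t ∈ (a,b) ∩ T is a dense point (σ(t) = t = ρ(t)) at which the Lebesgue point property lim_{ε↓0} (1/ε) ∫_{t−ε}^{t+ε} |g(s) − g(t)| ds = 0 holds, then the function f(x) = ∫_{[a,x)} g dμ_σ (x ∈ T ∩ [a,b]) is delta differentiable at t with f^Δ(t) = g(t). -/
open Set MeasureTheory Filter Topology Function

/-! On `[p, q)` with `p, q ∈ T` the measure `μ_σ` is the image of Lebesgue measure under `ρ`,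
because there `ρ w ≤ x ↔ w ≤ σ x`. As `ρ` moves only the countably many left-scattered points
of `T` and `g = g ∘ ρ` off `T`, for `x ∈ T` the `μ_σ`-integral of `g` over `[a, x)` is the
Lebesgue primitive `∫ a..x, g`. At a Lebesgue point of `g` this primitive has ordinary derivative
`g t`, and at a right-dense point the delta derivative is just the derivative within `T`. -/

section TimeScale

variable {T : Set ℝ} {p v w x : ℝ}

lemma fwd_le (hv : v ∈ T) (hxv : x < v) : fwd T x ≤ v := by
  rw [fwd, if_pos ⟨v, hv, hxv⟩]
  exact csInf_le ⟨x, fun s hs => hs.2.le⟩ ⟨hv, hxv⟩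

lemma le_fwd (hv : v ∈ T) (hxv : x < v) : x ≤ fwd T x := by
  rw [fwd, if_pos ⟨v, hv, hxv⟩]
  exact le_csInf ⟨v, hv, hxv⟩ fun s hs => hs.2.le

lemma le_bwd (hv : v ∈ T) (hvx : v < x) : v ≤ bwd T x := by
  rw [bwd, if_pos ⟨v, hv, hvx⟩]
  exact le_csSup ⟨x, fun s hs => hs.2.le⟩ ⟨hv, hvx⟩

lemma bddBelow_of_not_nonempty_lt (h : ¬{s | s ∈ T ∧ s < x}.Nonempty) : BddBelow T :=
  ⟨x, fun s hs => not_lt.1 fun hsx => h ⟨s, hs, hsx⟩⟩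

lemma bwd_le (hp : p ∈ T) (hpx : p ≤ x) : bwd T x ≤ x := by
  rw [bwd]
  split_ifs with h
  · exact csSup_le h fun s hs => hs.2.le
  · exact (csInf_le (bddBelow_of_not_nonempty_lt h) hp).trans hpx

lemma bwd_le_of_le_fwd (hp : p ∈ T) (hpx : p ≤ x) (hw : w ≤ fwd T x) : bwd T w ≤ x := by
  rw [bwd]
  split_ifs with h
  · refine csSup_le h fun s hs => not_lt.1 fun hxs => ?_
    exact (hs.2.trans_le hw).not_ge (fwd_le hs.1 hxs)
  · exact (csInf_le (bddBelow_of_not_nonempty_lt h) hp).trans hpx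

lemma lt_bwd_of_fwd_lt (hv : v ∈ T) (hxv : x < v) (hw : fwd T x < w) : x < bwd T w := by
  rw [fwd, if_pos ⟨v, hv, hxv⟩] at hw
  obtain ⟨s, ⟨hsT, hxs⟩, hsw⟩ :=
    exists_lt_of_csInf_lt (s := {s | s ∈ T ∧ x < s}) ⟨v, hv, hxv⟩ hw
  exact hxs.trans_le (le_bwd hsT hsw)

lemma bwd_mono : Monotone (bwd T) := by
  intro x y hxy
  rw [bwd, bwd]
  split_ifs with hx hy hy
  · exact csSup_le_csSup ⟨y, fun s hs => hs.2.le⟩ hx fun s hs => ⟨hs.1, hs.2.trans_le hxy⟩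
  · obtain ⟨s, hsT, hsx⟩ := hx
    exact absurd ⟨s, hsT, hsx.trans_le hxy⟩ hy
  · obtain ⟨s, hsT, hsy⟩ := hy
    exact (csInf_le (bddBelow_of_not_nonempty_lt hx) hsT).trans
      (le_csSup ⟨y, fun s hs => hs.2.le⟩ ⟨hsT, hsy⟩)
  · exact le_rfl

/-- The gaps `(ρ w, w)` in front of distinct left-scattered points are disjoint open intervals. -/
lemma countable_setOf_bwd_ne : {w | w ∈ T ∧ bwd T w ≠ w}.Countable := by
  have hdisj : ∀ w₁ ∈ T, ∀ w₂, w₁ < w₂ → Disjoint (Ioo (bwd T w₁) w₁) (Ioo (bwd T w₂) w₂) :=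
    fun w₁ hw₁ w₂ h => Set.disjoint_left.2 fun y hy₁ hy₂ =>
      (hy₁.2.trans_le (le_bwd hw₁ h)).not_gt hy₂.1
  refine Set.PairwiseDisjoint.countable_of_isOpen (s := fun w => Ioo (bwd T w) w) ?_
    (fun _ _ => isOpen_Ioo) fun w hw => nonempty_Ioo.2 ((bwd_le hw.1 le_rfl).lt_of_ne hw.2)
  intro w₁ hw₁ w₂ hw₂ hne
  rcases hne.lt_or_gt with h | h
  · exact hdisj w₁ hw₁.1 w₂ h
  · exact (hdisj w₂ hw₂.1 w₁ h).symm

lemma ae_comp_bwd_eq {β : Type*} {g : ℝ → β} (hcomp : ∀ s, s ∉ T → g s = g (bwd T s)) :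
    ∀ᵐ w, g (bwd T w) = g w := by
  refine measure_mono_null (fun w hw => ?_) ((countable_setOf_bwd_ne (T := T)).measure_zero _)
  by_cases hwT : w ∈ T
  · exact ⟨hwT, fun h => hw (congrArg g h)⟩
  · exact absurd (hcomp w hwT).symm hw

end TimeScale

section Stieltjes

variable {T : Set ℝ} {F : StieltjesFunction ℝ} {p q x : ℝ}

lemma leftLim_eq_self (hF : ∀ t, F t = fwd T t) (hp : p ∈ T) : leftLim F p = p := by
  apply le_antisymm
  · refine le_of_tendsto (F.mono.tendsto_leftLim p) ?_
    filter_upwards [self_mem_nhdsWithin] with u hu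
    exact (hF u).trans_le (fwd_le hp hu)
  · refine le_of_forall_lt_imp_le_of_dense fun u hu => ?_
    exact (le_fwd hp hu).trans ((hF u).symm.trans_le (F.mono.le_leftLim hu))

lemma volume_eq_of_Ico_subset_of_subset_Icc {s : Set ℝ} (h₁ : Ico p q ⊆ s) (h₂ : s ⊆ Icc p q) :
    volume s = ENNReal.ofReal (q - p) :=
  le_antisymm ((measure_mono h₂).trans_eq Real.volume_Icc)
    (Real.volume_Ico.symm.trans_le (measure_mono h₁))

lemma preimage_bwd_Iic_inter_Ico_subset (hq : q ∈ T) (hxq : x < q) :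
    bwd T ⁻¹' Iic x ∩ Ico p q ⊆ Icc p (fwd T x) :=
  fun _ ⟨hw, hpw, _⟩ => ⟨hpw, not_lt.1 fun h => (lt_bwd_of_fwd_lt hq hxq h).not_ge hw⟩

lemma volume_preimage_bwd_Iic_inter_Ico (hp : p ∈ T) (hq : q ∈ T) (hpx : p ≤ x) (hxq : x < q) :
    volume (bwd T ⁻¹' Iic x ∩ Ico p q) = ENNReal.ofReal (fwd T x - p) :=
  volume_eq_of_Ico_subset_of_subset_Icc
    (fun _ ⟨hpw, hw⟩ => ⟨bwd_le_of_le_fwd hp hpx hw.le, hpw, hw.trans_le (fwd_le hq hxq)⟩)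
    (preimage_bwd_Iic_inter_Ico_subset hq hxq)

lemma measure_restrict_Ico_eq_map_bwd (hF : ∀ t, F t = fwd T t) (hp : p ∈ T) (hq : q ∈ T) :
    F.measure.restrict (Ico p q) = (volume.restrict (Ico p q)).map (bwd T) := by
  have hbwd : Measurable (bwd T) := bwd_mono.measurable
  have : IsFiniteMeasure (F.measure.restrict (Ico p q)) := ⟨by
    rw [Measure.restrict_apply_univ, F.measure_Ico]
    exact ENNReal.ofReal_lt_top⟩
  refine Measure.ext_of_Iic _ _ fun x => ?_
  rw [Measure.restrict_apply measurableSet_Iic, Measure.map_apply hbwd measurableSet_Iic,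
    Measure.restrict_apply (hbwd measurableSet_Iic)]
  rcases lt_or_ge x p with hxp | hpx
  · have hsub : bwd T ⁻¹' Iic x ∩ Ico p q ⊆ {p} := fun w ⟨hw, hpw, _⟩ =>
      le_antisymm (not_lt.1 fun h => (hxp.trans_le (le_bwd hp h)).not_ge hw) hpw
    have hempty : Iic x ∩ Ico p q = ∅ :=
      eq_empty_of_forall_notMem fun w hw => (hw.1.trans_lt hxp).not_ge hw.2.1
    rw [hempty, measure_empty, measure_mono_null hsub (measure_singleton p)]
  rcases lt_or_ge x q with hxq | hqx
  · have hIcc : Iic x ∩ Ico p q = Icc p x := by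
      ext w
      simp only [mem_inter_iff, mem_Iic, mem_Ico, mem_Icc]
      exact ⟨fun h => ⟨h.2.1, h.1⟩, fun h => ⟨h.2, h.1, h.2.trans_lt hxq⟩⟩
    rw [hIcc, F.measure_Icc, leftLim_eq_self hF hp, hF,
      volume_preimage_bwd_Iic_inter_Ico hp hq hpx hxq]
  · have hle : Ico p q ⊆ Iic x := fun w hw => hw.2.le.trans hqx
    have hle' : Ico p q ⊆ bwd T ⁻¹' Iic x := fun w hw => (bwd_le hp hw.1).trans (hle hw)
    rw [inter_eq_right.2 hle, inter_eq_right.2 hle', F.measure_Ico, leftLim_eq_self hF hp,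
      leftLim_eq_self hF hq, Real.volume_Ico]

end Stieltjes

section Transfer

variable {T : Set ℝ} {F : StieltjesFunction ℝ} {p q : ℝ} {E : Type*} [NormedAddCommGroup E]
  {g : ℝ → E}

lemma integrableOn_Ico_of_stieltjes (hF : ∀ t, F t = fwd T t)
    (hcomp : ∀ s, s ∉ T → g s = g (bwd T s)) (hp : p ∈ T) (hq : q ∈ T)
    (hg : IntegrableOn g (Ico p q) F.measure) : IntegrableOn g (Ico p q) := by
  rw [IntegrableOn, measure_restrict_Ico_eq_map_bwd hF hp hq] at hg
  have hg_bwd := (integrable_map_measure hg.aestronglyMeasurable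
    bwd_mono.measurable.aemeasurable).1 hg
  exact hg_bwd.congr (ae_restrict_of_ae (ae_comp_bwd_eq hcomp))

lemma setIntegral_Ico_stieltjes_eq [NormedSpace ℝ E] (hF : ∀ t, F t = fwd T t)
    (hcomp : ∀ s, s ∉ T → g s = g (bwd T s)) (hp : p ∈ T) (hq : q ∈ T)
    (hg : IntegrableOn g (Ico p q) F.measure) :
    ∫ s in Ico p q, g s ∂F.measure = ∫ s in Ico p q, g s := by
  rw [IntegrableOn, measure_restrict_Ico_eq_map_bwd hF hp hq] at hg
  rw [measure_restrict_Ico_eq_map_bwd hF hp hq,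
    integral_map bwd_mono.measurable.aemeasurable hg.aestronglyMeasurable]
  exact integral_congr_ae (ae_restrict_of_ae (ae_comp_bwd_eq hcomp))

end Transfer

section LebesguePoint

variable {E : Type*} [NormedAddCommGroup E] [NormedSpace ℝ E] [CompleteSpace E]
  {g : ℝ → E} {a b r t x : ℝ}

def IsLebesguePoint (g : ℝ → E) (t : ℝ) : Prop :=
  Tendsto (fun ε : ℝ => ε⁻¹ * ∫ s in Icc (t - ε) (t + ε), ‖g s - g t‖) (𝓝[>] 0) (𝓝 0)

lemma norm_intervalIntegral_sub_smul_le (hxt : |x - t| ≤ r)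
    (hg : IntegrableOn g (Icc (t - r) (t + r))) :
    ‖(∫ s in t..x, g s) - (x - t) • g t‖ ≤ ∫ s in Icc (t - r) (t + r), ‖g s - g t‖ := by
  obtain ⟨hlo, hhi⟩ := abs_le.1 hxt
  have hsub : uIcc t x ⊆ Icc (t - r) (t + r) :=
    uIcc_subset_Icc ⟨by linarith, by linarith⟩ ⟨by linarith, by linarith⟩
  have hgt : IntervalIntegrable g volume t x := (hg.mono_set hsub).intervalIntegrable
  calc ‖(∫ s in t..x, g s) - (x - t) • g t‖ = ‖∫ s in t..x, (g s - g t)‖ := by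
        rw [intervalIntegral.integral_sub hgt intervalIntegrable_const,
          intervalIntegral.integral_const]
    _ ≤ ∫ s in uIoc t x, ‖g s - g t‖ := intervalIntegral.norm_integral_le_integral_norm_uIoc
    _ ≤ ∫ s in Icc (t - r) (t + r), ‖g s - g t‖ :=
        setIntegral_mono_set (hg.sub (integrableOn_const (by simp))).norm
          (Eventually.of_forall fun _ => norm_nonneg _)
          (uIoc_subset_uIcc.trans hsub).eventuallyLE

lemma hasDerivAt_integral_of_isLebesguePoint (hg : IntegrableOn g (Icc a b))
    (ht : t ∈ Ioo a b) (hleb : IsLebesguePoint g t) :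
    HasDerivAt (fun x => ∫ s in a..x, g s) (g t) t := by
  rw [hasDerivAt_iff_isLittleO, Asymptotics.isLittleO_iff]
  intro c hc
  have hr : ∀ᶠ r in 𝓝[>] 0, r⁻¹ * ∫ s in Icc (t - r) (t + r), ‖g s - g t‖ < c ∧
      r < t - a ∧ r < b - t :=
    (hleb.eventually (gt_mem_nhds hc)).and (nhdsWithin_le_nhds
      ((eventually_lt_nhds (sub_pos.2 ht.1)).and (eventually_lt_nhds (sub_pos.2 ht.2))))
  have hdist : Tendsto (fun x => |x - t|) (𝓝[≠] t) (𝓝[>] 0) := by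
    refine tendsto_nhdsWithin_iff.2 ⟨?_, ?_⟩
    · exact ((continuous_abs.comp (continuous_sub_right t)).tendsto' t 0 (by simp)).mono_left
        nhdsWithin_le_nhds
    · filter_upwards [self_mem_nhdsWithin] with x hx using abs_pos.2 (sub_ne_zero.2 hx)
  have hprim : ∀ y ∈ Icc a b, IntervalIntegrable g volume a y := fun y hy =>
    (hg.mono_set (uIcc_subset_Icc (left_mem_Icc.2 (hy.1.trans hy.2)) hy)).intervalIntegrable
  filter_upwards [eventually_nhdsWithin_iff.1 (hdist.eventually hr),
    Icc_mem_nhds ht.1 ht.2] with x hx hxab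
  rcases eq_or_ne x t with rfl | hxt
  · simp
  obtain ⟨havg, hra, hrb⟩ := hx hxt
  have hr0 : 0 < |x - t| := abs_pos.2 (sub_ne_zero.2 hxt)
  calc ‖(∫ s in a..x, g s) - (∫ s in a..t, g s) - (x - t) • g t‖
      = ‖(∫ s in t..x, g s) - (x - t) • g t‖ := by
        rw [intervalIntegral.integral_interval_sub_left (hprim x hxab)
          (hprim t (Ioo_subset_Icc_self ht))]
    _ ≤ ∫ s in Icc (t - |x - t|) (t + |x - t|), ‖g s - g t‖ :=
        norm_intervalIntegral_sub_smul_le le_rfl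
          (hg.mono_set (Icc_subset_Icc (by linarith) (by linarith)))
    _ ≤ c * ‖x - t‖ := by
        rw [inv_mul_lt_iff₀ hr0] at havg
        rw [Real.norm_eq_abs, mul_comm]
        exact havg.le

end LebesguePoint

lemma hasDeltaDerivAt_of_hasDerivWithinAt {T : Set ℝ} {f : ℝ → ℂ} {t : ℝ} {L : ℂ}
    (hσ : fwd T t = t) (hf : HasDerivWithinAt f L T t) : HasDeltaDerivAt T f t L := by
  intro ε hε
  refine ⟨_, (hasDerivWithinAt_iff_isLittleO.1 hf).def hε, fun s hs => ?_⟩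
  rw [hσ]
  calc ‖f t - f s - L * (t - s)‖ = ‖f s - f t - (s - t) • L‖ := by
        rw [← norm_neg, Complex.real_smul]
        push_cast
        ring_nf
    _ ≤ ε * ‖s - t‖ := hs
    _ = ε * |t - s| := by rw [Real.norm_eq_abs, abs_sub_comm]

theorem deltaDeriv_at_dense_lebesgue_point_general
    (T : Set ℝ)
    (F : StieltjesFunction ℝ) (hF : ∀ t, F t = fwd T t)
    (a b : ℝ) (ha : a ∈ T) (hb : b ∈ T)
    (g : ℝ → ℂ) (hg : IntegrableOn g (Ico a b) F.measure)
    (hcomp : ∀ s, s ∉ T → g s = g (bwd T s))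
    (t : ℝ) (ht : t ∈ Ioo a b) (htT : t ∈ T)
    (hrd : fwd T t = t)
    (hleb : Tendsto (fun ε : ℝ => ε⁻¹ * ∫ s in Icc (t - ε) (t + ε), ‖g s - g t‖)
      (𝓝[>] (0:ℝ)) (𝓝 0)) :
    HasDeltaDerivAt T (fun x => ∫ s in Ico a x, g s ∂F.measure) t (g t) := by
  have hgIcc : IntegrableOn g (Icc a b) := by
    rw [integrableOn_Icc_iff_integrableOn_Ico]
    exact integrableOn_Ico_of_stieltjes hF hcomp ha hb hg
  have hprim : ∀ x ∈ T, x ∈ Icc a b →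
      ∫ s in Ico a x, g s ∂F.measure = ∫ s in a..x, g s := fun x hxT hx => by
    rw [setIntegral_Ico_stieltjes_eq hF hcomp ha hxT (hg.mono_set (Ico_subset_Ico_right hx.2)),
      integral_Ico_eq_integral_Ioc, intervalIntegral.integral_of_le hx.1]
  apply hasDeltaDerivAt_of_hasDerivWithinAt hrd
  refine (hasDerivAt_integral_of_isLebesguePoint hgIcc ht hleb).hasDerivWithinAt
    |>.congr_of_eventuallyEq ?_ (hprim t htT (Ioo_subset_Icc_self ht))
  filter_upwards [self_mem_nhdsWithin, nhdsWithin_le_nhds (Icc_mem_nhds ht.1 ht.2)]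
    with x hxT hx using hprim x hxT hx

theorem deltaDeriv_at_dense_lebesgue_point
    (T : Set ℝ) (hne : T.Nonempty) (hcl : IsClosed T)
    (F : StieltjesFunction ℝ) (hF : ∀ t, F t = fwd T t)
    (a b : ℝ) (ha : a ∈ T) (hb : b ∈ T) (hab : a < b)
    (g : ℝ → ℂ) (hg : IntegrableOn g (Ico a b) F.measure)
    (hcomp : ∀ s, s ∉ T → g s = g (bwd T s))
    (t : ℝ) (ht : t ∈ Ioo a b) (htT : t ∈ T)
    (hrd : fwd T t = t) (hld : bwd T t = t)
    (hleb : Tendsto (fun ε : ℝ => ε⁻¹ * ∫ s in Icc (t - ε) (t + ε), ‖g s - g t‖)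
      (𝓝[>] (0:ℝ)) (𝓝 0)) :
    HasDeltaDerivAt T (fun x => ∫ s in Ico a x, g s ∂F.measure) t (g t) :=
  deltaDeriv_at_dense_lebesgue_point_general T F hF a b ha hb g hg hcomp t ht htT hrd hleb
end
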